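/- arXiv:1704.02558 — 6 statements merged into one kernel-verified Lean document; each statement's English description precedes it below -/
import Mathlib

section
/- If a ∈ ℂ satisfies i·a ∉ [−1,1] (i.e., a is not of the form i·t with t ∈ [−1,1]), then at least one of the two equations β² + i·conj(a) = 1 or β² − i·conj(a) = 1 has a root β ∈ ℂ with Im β > 0. -/
lemma aux_sqrt_pos_im (z : ℂ) (hz : ¬ (z.im = 0 ∧ 0 ≤ z.re)) :
    ∃ β : ℂ, β ^ 2 = z ∧ 0 < β.im := by
  obtain ⟨w, hw⟩ := Complex.isAlgClosed.exists_pow_nat_eq z two_pos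
  rcases lt_trichotomy w.im 0 with h | h | h
  · exact ⟨-w, by rw [neg_pow, ← hw]; ring, by simpa using h⟩
  · exfalso
    apply hz
    constructor
    · rw [← hw]; simp [Complex.sq_norm, pow_two, Complex.mul_im, h]
    · rw [← hw]
      simp only [pow_two, Complex.mul_re, h]
      nlinarith [sq_nonneg w.re]
  · exact ⟨w, hw, h⟩

theorem stmt_1 (a : ℂ) (ha : ¬ ∃ t : ℝ, t ∈ Set.Icc (-1 : ℝ) 1 ∧ Complex.I * a = (t : ℂ)) :
    ∃ β : ℂ, (β ^ 2 + Complex.I * (starRingEnd ℂ a) = 1 ∨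
              β ^ 2 - Complex.I * (starRingEnd ℂ a) = 1) ∧ 0 < β.im := by
  set c : ℂ := Complex.I * (starRingEnd ℂ a) with hc
  have key : ¬ ((1 - c).im = 0 ∧ 0 ≤ (1 - c).re) ∨ ¬ ((1 + c).im = 0 ∧ 0 ≤ (1 + c).re) := by
    by_contra h
    push_neg at h
    obtain ⟨⟨h1, h2⟩, ⟨h3, h4⟩⟩ := h
    apply ha
    simp only [Complex.sub_re, Complex.add_re, Complex.one_re] at h2 h4
    refine ⟨-c.re, ⟨by linarith, by linarith⟩, ?_⟩
    have him : c.im = 0 := by simp [Complex.sub_im] at h1; linarith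
    have hceq : c = ((c.re : ℝ) : ℂ) := Complex.ext (by simp) (by simpa using him)
    have hconj : starRingEnd ℂ (Complex.I * a) = -c := by
      rw [hc]; simp [map_mul]
    have := congrArg (starRingEnd ℂ) hconj
    simp only [starRingEnd_self_apply] at this
    rw [this, map_neg, hceq, Complex.conj_ofReal]
    simp
  rcases key with h | h
  · obtain ⟨β, hβ, hpos⟩ := aux_sqrt_pos_im _ h
    exact ⟨β, Or.inl (by rw [hβ]; ring), hpos⟩
  · obtain ⟨β, hβ, hpos⟩ := aux_sqrt_pos_im _ h
    exact ⟨β, Or.inr (by rw [hβ]; ring), hpos⟩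
end

section
/- For all u ∈ C₀^∞(ℝ²) (smooth compactly supported functions of (x,y)), |⟨∂_y u, u⟩| ≤ 2‖∂_x u‖·‖x∂_y u‖ ≤ ‖∂_x u‖² + ‖x∂_y u‖², where ⟨·,·⟩ and ‖·‖ are the L²(ℝ²) inner product and norm. -/
open MeasureTheory

noncomputable section

/-- Partial derivative in `x` of a function on `ℝ²`. -/
lemma oneD {f : ℝ → ℂ} (hf : ContDiff ℝ 1 f) (hs : HasCompactSupport f) :
    ∫ x : ℝ, deriv f x = 0 := by
  have hd : Continuous (deriv f) := hf.continuous_deriv le_rfl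
  have hds : HasCompactSupport (deriv f) := hs.deriv
  have hint : Integrable (deriv f) := hd.integrable_of_hasCompactSupport hds
  rw [← intervalIntegral.integral_Iic_add_Ioi (b := 0) hint.integrableOn hint.integrableOn,
    hs.integral_Iic_deriv_eq hf, hs.integral_Ioi_deriv_eq hf]
  ring

lemma int_of_cs {f : ℝ × ℝ → ℂ} (hc : Continuous f) (hs : HasCompactSupport f) :
    Integrable f := hc.integrable_of_hasCompactSupport hs

lemma pd_contDiff (v : ℝ × ℝ) {f : ℝ × ℝ → ℂ} (hf : ContDiff ℝ (⊤ : ℕ∞) f) :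
    ContDiff ℝ (⊤ : ℕ∞) (fun p => fderiv ℝ f p v) :=
  (hf.fderiv_right (by simp)).clm_apply contDiff_const

lemma pd_supp (v : ℝ × ℝ) {f : ℝ × ℝ → ℂ} (hs : HasCompactSupport f) :
    HasCompactSupport (fun p => fderiv ℝ f p v) := hs.fderiv_apply ℝ v

lemma integral_pdx_eq_zero {f : ℝ × ℝ → ℂ} (hf : ContDiff ℝ (⊤ : ℕ∞) f)
    (hs : HasCompactSupport f) : ∫ p : ℝ × ℝ, fderiv ℝ f p (1, 0) = 0 := by
  have hint : Integrable (fun p : ℝ × ℝ => fderiv ℝ f p (1, 0)) :=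
    int_of_cs ((pd_contDiff _ hf).continuous) (pd_supp _ hs)
  rw [Measure.volume_eq_prod] at hint ⊢
  rw [MeasureTheory.integral_prod _ hint]
  rw [integral_integral_swap (by exact hint)]
  have : ∀ y : ℝ, ∫ x : ℝ, fderiv ℝ f (x, y) (1, 0) = 0 := by
    intro y
    have hiso : Isometry (fun t : ℝ => (t, y)) := by
      apply Isometry.of_dist_eq
      intro a b
      simp [Prod.dist_eq, dist_nonneg]
    have hg : ContDiff ℝ 1 (fun t : ℝ => f (t, y)) :=
      (hf.comp (contDiff_id.prodMk contDiff_const)).of_le (by simp)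
    have hgs : HasCompactSupport (fun t : ℝ => f (t, y)) :=
      hs.comp_isClosedEmbedding hiso.isClosedEmbedding
    have hder : ∀ x : ℝ, deriv (fun t : ℝ => f (t, y)) x = fderiv ℝ f (x, y) (1, 0) := by
      intro x
      have h1 : HasDerivAt (fun t : ℝ => (t, y)) ((1 : ℝ), (0 : ℝ)) x :=
        (hasDerivAt_id x).prodMk (hasDerivAt_const x y)
      exact (((hf.differentiable (by simp)) (x, y)).hasFDerivAt.comp_hasDerivAt x h1).deriv
    calc ∫ x : ℝ, fderiv ℝ f (x, y) (1, 0)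
        = ∫ x : ℝ, deriv (fun t : ℝ => f (t, y)) x := by
          exact integral_congr_ae (Filter.Eventually.of_forall fun x => (hder x).symm)
      _ = 0 := oneD hg hgs
  simp [this]

lemma integral_pdy_eq_zero {f : ℝ × ℝ → ℂ} (hf : ContDiff ℝ (⊤ : ℕ∞) f)
    (hs : HasCompactSupport f) : ∫ p : ℝ × ℝ, fderiv ℝ f p (0, 1) = 0 := by
  have hint : Integrable (fun p : ℝ × ℝ => fderiv ℝ f p (0, 1)) :=
    int_of_cs ((pd_contDiff _ hf).continuous) (pd_supp _ hs)
  rw [Measure.volume_eq_prod] at hint ⊢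
  rw [MeasureTheory.integral_prod _ hint]
  have : ∀ x : ℝ, ∫ y : ℝ, fderiv ℝ f (x, y) (0, 1) = 0 := by
    intro x
    have hiso : Isometry (fun t : ℝ => (x, t)) := by
      apply Isometry.of_dist_eq
      intro a b
      simp [Prod.dist_eq, dist_nonneg]
    have hg : ContDiff ℝ 1 (fun t : ℝ => f (x, t)) :=
      (hf.comp (contDiff_const.prodMk contDiff_id)).of_le (by simp)
    have hgs : HasCompactSupport (fun t : ℝ => f (x, t)) :=
      hs.comp_isClosedEmbedding hiso.isClosedEmbedding
    have hder : ∀ y : ℝ, deriv (fun t : ℝ => f (x, t)) y = fderiv ℝ f (x, y) (0, 1) := by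
      intro y
      have h1 : HasDerivAt (fun t : ℝ => (x, t)) ((0 : ℝ), (1 : ℝ)) y :=
        (hasDerivAt_const y x).prodMk (hasDerivAt_id y)
      exact (((hf.differentiable (by simp)) (x, y)).hasFDerivAt.comp_hasDerivAt y h1).deriv
    calc ∫ y : ℝ, fderiv ℝ f (x, y) (0, 1)
        = ∫ y : ℝ, deriv (fun t : ℝ => f (x, t)) y := by
          exact integral_congr_ae (Filter.Eventually.of_forall fun y => (hder y).symm)
      _ = 0 := oneD hg hgs
  simp [this]

lemma pd_mul (v : ℝ × ℝ) {f g : ℝ × ℝ → ℂ} {p : ℝ × ℝ}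
    (hf : DifferentiableAt ℝ f p) (hg : DifferentiableAt ℝ g p) :
    fderiv ℝ (fun q => f q * g q) p v = fderiv ℝ f p v * g p + f p * fderiv ℝ g p v := by
  rw [fderiv_fun_mul hf hg]
  simp only [ContinuousLinearMap.add_apply, ContinuousLinearMap.smul_apply, smul_eq_mul]
  ring

lemma pd_conj (v : ℝ × ℝ) {f : ℝ × ℝ → ℂ} {p : ℝ × ℝ} (hf : DifferentiableAt ℝ f p) :
    fderiv ℝ (fun q => (starRingEnd ℂ) (f q)) p v = (starRingEnd ℂ) (fderiv ℝ f p v) := by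
  have h : HasFDerivAt (fun q => (starRingEnd ℂ) (f q))
      ((Complex.conjCLE.toContinuousLinearMap).comp (fderiv ℝ f p)) p :=
    (Complex.conjCLE.toContinuousLinearMap.hasFDerivAt).comp p hf.hasFDerivAt
  rw [h.fderiv]
  rfl

lemma pd_coord (v : ℝ × ℝ) (p : ℝ × ℝ) :
    fderiv ℝ (fun q : ℝ × ℝ => (q.1 : ℂ)) p v = (v.1 : ℂ) := by
  have h : HasFDerivAt (fun q : ℝ × ℝ => (q.1 : ℂ))
      (Complex.ofRealCLM.comp (ContinuousLinearMap.fst ℝ ℝ ℝ)) p :=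
    (Complex.ofRealCLM.hasFDerivAt).comp p hasFDerivAt_fst
  rw [h.fderiv]
  rfl

lemma pd_pd (v w : ℝ × ℝ) {f : ℝ × ℝ → ℂ} (hf : ContDiff ℝ (⊤ : ℕ∞) f) (p : ℝ × ℝ) :
    fderiv ℝ (fun q => fderiv ℝ f q w) p v = fderiv ℝ (fderiv ℝ f) p v w := by
  have hd : DifferentiableAt ℝ (fderiv ℝ f) p :=
    ((hf.fderiv_right (m := 1) (by exact WithTop.coe_le_coe.mpr le_top)).differentiable one_ne_zero) p
  have h : HasFDerivAt (fun q => fderiv ℝ f q w)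
      ((ContinuousLinearMap.apply ℝ ℂ w).comp (fderiv ℝ (fderiv ℝ f) p)) p :=
    ((ContinuousLinearMap.apply ℝ ℂ w).hasFDerivAt).comp p hd.hasFDerivAt
  rw [h.fderiv]
  rfl

lemma pd_symm {f : ℝ × ℝ → ℂ} (hf : ContDiff ℝ (⊤ : ℕ∞) f) (p : ℝ × ℝ) (v w : ℝ × ℝ) :
    fderiv ℝ (fun q => fderiv ℝ f q w) p v = fderiv ℝ (fun q => fderiv ℝ f q v) p w := by
  rw [pd_pd v w hf p, pd_pd w v hf p]
  exact second_derivative_symmetric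
    (fun y => ((hf.differentiable (by simp)) y).hasFDerivAt)
    (((hf.fderiv_right (m := 1) (by exact WithTop.coe_le_coe.mpr le_top)).differentiable one_ne_zero) p).hasFDerivAt w v |>.symm

lemma cs_ineq {f g : ℝ × ℝ → ℂ} (cf : Continuous f) (sf : HasCompactSupport f)
    (cg : Continuous g) (sg : HasCompactSupport g) :
    ‖∫ p : ℝ × ℝ, (starRingEnd ℂ) (g p) * f p‖ ≤
      Real.sqrt (∫ p : ℝ × ℝ, ‖g p‖ ^ 2) * Real.sqrt (∫ p : ℝ × ℝ, ‖f p‖ ^ 2) := by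
  have h1 : ‖∫ p : ℝ × ℝ, (starRingEnd ℂ) (g p) * f p‖ ≤
      ∫ p : ℝ × ℝ, ‖g p‖ * ‖f p‖ := by
    refine (norm_integral_le_integral_norm _).trans_eq ?_
    congr 1
    ext p
    simp [norm_mul]
  refine h1.trans ?_
  have hpq : Real.HolderConjugate 2 2 := Real.HolderConjugate.two_two
  have hmg : MemLp (fun p => ‖g p‖) (ENNReal.ofReal 2) volume :=
    cg.norm.memLp_of_hasCompactSupport (sg.comp_left norm_zero)
  have hmf : MemLp (fun p => ‖f p‖) (ENNReal.ofReal 2) volume :=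
    cf.norm.memLp_of_hasCompactSupport (sf.comp_left norm_zero)
  have h2 := integral_mul_le_Lp_mul_Lq_of_nonneg hpq
    (Filter.Eventually.of_forall fun p => norm_nonneg (g p))
    (Filter.Eventually.of_forall fun p => norm_nonneg (f p)) hmg hmf
  have e1 : ∀ (h : ℝ × ℝ → ℂ), (∫ p : ℝ × ℝ, ‖h p‖ ^ (2 : ℝ)) = ∫ p : ℝ × ℝ, ‖h p‖ ^ 2 := by
    intro h
    congr 1
    ext p
    rw [show (2 : ℝ) = ((2 : ℕ) : ℝ) by norm_num, Real.rpow_natCast]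
  rw [e1, e1] at h2
  refine h2.trans_eq ?_
  rw [← Real.sqrt_eq_rpow, ← Real.sqrt_eq_rpow]

def pdx (f : ℝ × ℝ → ℂ) (p : ℝ × ℝ) : ℂ := fderiv ℝ f p (1, 0)

/-- Partial derivative in `y` of a function on `ℝ²`. -/
def pdy (f : ℝ × ℝ → ℂ) (p : ℝ × ℝ) : ℂ := fderiv ℝ f p (0, 1)

/-- `L²(ℝ²)` inner product `⟨f, g⟩ = ∫ conj g · f`. -/
def innerL2 (f g : ℝ × ℝ → ℂ) : ℂ := ∫ p : ℝ × ℝ, (starRingEnd ℂ) (g p) * f p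

/-- Square of the `L²(ℝ²)` norm. -/
def normL2sq (f : ℝ × ℝ → ℂ) : ℝ := ∫ p : ℝ × ℝ, ‖f p‖ ^ 2

/-- `L²(ℝ²)` norm. -/
def normL2 (f : ℝ × ℝ → ℂ) : ℝ := Real.sqrt (normL2sq f)

theorem stmt_3 (u : ℝ × ℝ → ℂ) (hu : ContDiff ℝ (⊤ : ℕ∞) u) (hsupp : HasCompactSupport u) :
    ‖innerL2 (pdy u) u‖ ≤ 2 * normL2 (pdx u) * normL2 (fun p => (p.1 : ℂ) * pdy u p) ∧
    2 * normL2 (pdx u) * normL2 (fun p => (p.1 : ℂ) * pdy u p)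
      ≤ normL2sq (pdx u) + normL2sq (fun p => (p.1 : ℂ) * pdy u p) := by
  -- abbreviations
  have du : Differentiable ℝ u := hu.differentiable (by simp)
  have ca : ContDiff ℝ (⊤ : ℕ∞) (pdx u) := pd_contDiff (1, 0) hu
  have cb : ContDiff ℝ (⊤ : ℕ∞) (pdy u) := pd_contDiff (0, 1) hu
  have sa : HasCompactSupport (pdx u) := pd_supp (1, 0) hsupp
  have sb : HasCompactSupport (pdy u) := pd_supp (0, 1) hsupp
  have cx : ContDiff ℝ (⊤ : ℕ∞) (fun p : ℝ × ℝ => (p.1 : ℂ)) :=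
    (Complex.ofRealCLM.comp (ContinuousLinearMap.fst ℝ ℝ ℝ)).contDiff
  have cw : ContDiff ℝ (⊤ : ℕ∞) (fun p : ℝ × ℝ => (p.1 : ℂ) * pdy u p) := cx.mul cb
  have sw : HasCompactSupport (fun p : ℝ × ℝ => (p.1 : ℂ) * pdy u p) := sb.mul_left
  have hconj : ContDiff ℝ (⊤ : ℕ∞) (fun p => (starRingEnd ℂ) (u p)) :=
    Complex.conjCLE.toContinuousLinearMap.contDiff.comp hu
  have sconj : HasCompactSupport (fun p => (starRingEnd ℂ) (u p)) :=
    hsupp.comp_left (map_zero _)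
  -- the two auxiliary functions
  set F₁ : ℝ × ℝ → ℂ := fun p => (starRingEnd ℂ) (u p) * ((p.1 : ℂ) * pdy u p) with hF₁
  set F₂ : ℝ × ℝ → ℂ := fun p => (starRingEnd ℂ) (u p) * ((p.1 : ℂ) * pdx u p) with hF₂
  have cF₁ : ContDiff ℝ (⊤ : ℕ∞) F₁ := hconj.mul cw
  have cF₂ : ContDiff ℝ (⊤ : ℕ∞) F₂ := hconj.mul (cx.mul ca)
  have sF₁ : HasCompactSupport F₁ := sconj.mul_right
  have sF₂ : HasCompactSupport F₂ := sconj.mul_right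
  have h1 : ∫ p : ℝ × ℝ, fderiv ℝ F₁ p (1, 0) = 0 := integral_pdx_eq_zero cF₁ sF₁
  have h2 : ∫ p : ℝ × ℝ, fderiv ℝ F₂ p (0, 1) = 0 := integral_pdy_eq_zero cF₂ sF₂
  -- pointwise identity
  have hpt : ∀ p : ℝ × ℝ, fderiv ℝ F₁ p (1, 0) - fderiv ℝ F₂ p (0, 1) =
      (starRingEnd ℂ) (pdx u p) * ((p.1 : ℂ) * pdy u p)
      + (starRingEnd ℂ) (u p) * pdy u p
      - (starRingEnd ℂ) (pdy u p) * ((p.1 : ℂ) * pdx u p) := by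
    intro p
    have dxw : DifferentiableAt ℝ (fun q : ℝ × ℝ => (q.1 : ℂ) * pdy u q) p :=
      (cw.differentiable (by simp)) p
    have dxa : DifferentiableAt ℝ (fun q : ℝ × ℝ => (q.1 : ℂ) * pdx u q) p :=
      ((cx.mul ca).differentiable (by simp)) p
    have dconj : DifferentiableAt ℝ (fun q => (starRingEnd ℂ) (u q)) p :=
      (hconj.differentiable (by simp)) p
    have dX : DifferentiableAt ℝ (fun q : ℝ × ℝ => (q.1 : ℂ)) p :=
      (cx.differentiable (by simp)) p
    have da : DifferentiableAt ℝ (pdx u) p := (ca.differentiable (by simp)) p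
    have db : DifferentiableAt ℝ (pdy u) p := (cb.differentiable (by simp)) p
    have e1 : fderiv ℝ F₁ p (1, 0) =
        (starRingEnd ℂ) (pdx u p) * ((p.1 : ℂ) * pdy u p)
        + (starRingEnd ℂ) (u p) * (pdy u p + (p.1 : ℂ) * fderiv ℝ (pdy u) p (1, 0)) := by
      rw [hF₁]
      rw [pd_mul (1, 0) dconj dxw, pd_conj (1, 0) (du p), pd_mul (1, 0) dX db,
        pd_coord (1, 0) p]
      simp only [pdx, pdy]
      push_cast
      ring
    have e2 : fderiv ℝ F₂ p (0, 1) =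
        (starRingEnd ℂ) (pdy u p) * ((p.1 : ℂ) * pdx u p)
        + (starRingEnd ℂ) (u p) * ((p.1 : ℂ) * fderiv ℝ (pdx u) p (0, 1)) := by
      rw [hF₂]
      rw [pd_mul (0, 1) dconj dxa, pd_conj (0, 1) (du p), pd_mul (0, 1) dX da,
        pd_coord (0, 1) p]
      simp only [pdx, pdy]
      push_cast
      ring
    have esymm : fderiv ℝ (pdy u) p (1, 0) = fderiv ℝ (pdx u) p (0, 1) := by
      exact pd_symm hu p (1, 0) (0, 1)
    rw [e1, e2, esymm]
    ring
  -- integrability of the three terms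
  have iT1 : Integrable (fun p : ℝ × ℝ =>
      (starRingEnd ℂ) (pdx u p) * ((p.1 : ℂ) * pdy u p)) :=
    int_of_cs ((Complex.conjCLE.toContinuousLinearMap.continuous.comp ca.continuous).mul
      cw.continuous) ((sa.comp_left (map_zero _)).mul_right)
  have iT2 : Integrable (fun p : ℝ × ℝ => (starRingEnd ℂ) (u p) * pdy u p) :=
    int_of_cs ((Complex.conjCLE.toContinuousLinearMap.continuous.comp hu.continuous).mul
      cb.continuous) (sconj.mul_right)
  have iT3 : Integrable (fun p : ℝ × ℝ =>
      (starRingEnd ℂ) (pdy u p) * ((p.1 : ℂ) * pdx u p)) :=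
    int_of_cs ((Complex.conjCLE.toContinuousLinearMap.continuous.comp cb.continuous).mul
      (cx.mul ca).continuous) ((sb.comp_left (map_zero _)).mul_right)
  -- sum of integrals = 0
  set z : ℂ := ∫ p : ℝ × ℝ, (starRingEnd ℂ) (pdx u p) * ((p.1 : ℂ) * pdy u p) with hz
  have hsum : z + innerL2 (pdy u) u
      - (∫ p : ℝ × ℝ, (starRingEnd ℂ) (pdy u p) * ((p.1 : ℂ) * pdx u p)) = 0 := by
    have i1 : Integrable (fun p : ℝ × ℝ => fderiv ℝ F₁ p (1, 0)) :=
      int_of_cs (pd_contDiff (1, 0) cF₁).continuous (pd_supp (1, 0) sF₁)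
    have i2 : Integrable (fun p : ℝ × ℝ => fderiv ℝ F₂ p (0, 1)) :=
      int_of_cs (pd_contDiff (0, 1) cF₂).continuous (pd_supp (0, 1) sF₂)
    have : ∫ p : ℝ × ℝ, (fderiv ℝ F₁ p (1, 0) - fderiv ℝ F₂ p (0, 1)) = 0 := by
      rw [integral_sub i1 i2, h1, h2, sub_zero]
    rw [← this]
    rw [show (fun p : ℝ × ℝ => fderiv ℝ F₁ p (1, 0) - fderiv ℝ F₂ p (0, 1)) =
      (fun p : ℝ × ℝ => (starRingEnd ℂ) (pdx u p) * ((p.1 : ℂ) * pdy u p)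
        + (starRingEnd ℂ) (u p) * pdy u p
        - (starRingEnd ℂ) (pdy u p) * ((p.1 : ℂ) * pdx u p)) from funext hpt]
    have i12 : Integrable (fun p : ℝ × ℝ =>
        (starRingEnd ℂ) (pdx u p) * ((p.1 : ℂ) * pdy u p)
        + (starRingEnd ℂ) (u p) * pdy u p) := iT1.add iT2
    rw [integral_sub i12 iT3, integral_add iT1 iT2]
    rfl
  have hz' : (∫ p : ℝ × ℝ, (starRingEnd ℂ) (pdy u p) * ((p.1 : ℂ) * pdx u p)) =
      (starRingEnd ℂ) z := by
    rw [hz, ← integral_conj]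
    congr 1
    ext p
    simp only [map_mul, Complex.conj_conj, Complex.conj_ofReal]
    ring
  have hI : innerL2 (pdy u) u = (starRingEnd ℂ) z - z := by
    rw [hz'] at hsum
    linear_combination hsum
  -- norms
  have hnz : ‖z‖ ≤ normL2 (pdx u) * normL2 (fun p => (p.1 : ℂ) * pdy u p) := by
    rw [hz]
    exact cs_ineq cw.continuous sw ca.continuous sa
  have hA : (0 : ℝ) ≤ normL2sq (pdx u) := integral_nonneg fun p => by positivity
  have hB : (0 : ℝ) ≤ normL2sq (fun p => (p.1 : ℂ) * pdy u p) :=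
    integral_nonneg fun p => by positivity
  constructor
  · calc ‖innerL2 (pdy u) u‖ = ‖(starRingEnd ℂ) z - z‖ := by rw [hI]
      _ ≤ ‖(starRingEnd ℂ) z‖ + ‖z‖ := norm_sub_le _ _
      _ = 2 * ‖z‖ := by rw [RCLike.norm_conj]; ring
      _ ≤ 2 * (normL2 (pdx u) * normL2 (fun p => (p.1 : ℂ) * pdy u p)) := by
          linarith
      _ = 2 * normL2 (pdx u) * normL2 (fun p => (p.1 : ℂ) * pdy u p) := by ring
  · have := two_mul_le_add_sq (normL2 (pdx u)) (normL2 (fun p => (p.1 : ℂ) * pdy u p))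
    rw [normL2, normL2, Real.sq_sqrt hA, Real.sq_sqrt hB] at this
    calc 2 * normL2 (pdx u) * normL2 (fun p => (p.1 : ℂ) * pdy u p)
        ≤ normL2 (pdx u) ^ 2 + normL2 (fun p => (p.1 : ℂ) * pdy u p) ^ 2 :=
          two_mul_le_add_sq _ _
      _ = normL2sq (pdx u) + normL2sq (fun p => (p.1 : ℂ) * pdy u p) := by
          rw [normL2, normL2, Real.sq_sqrt hA, Real.sq_sqrt hB]

end
end

section
/- Let A = −∂_x² − x²∂_y² + iμ∂_y with μ ∈ ℝ, |μ| < 1. Then for all u ∈ C₀^∞(ℝ²): ⟨Au, u⟩ ≥ (1 − |μ|)(‖∂_x u‖² + ‖x∂_y u‖²). -/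
open MeasureTheory

noncomputable section

/-- The operator `A = -∂ₓ² - x²∂_y² + iμ∂_y`. -/
def opA (μ : ℝ) (u : ℝ × ℝ → ℂ) (p : ℝ × ℝ) : ℂ :=
  -pdx (pdx u) p - (p.1 : ℂ) ^ 2 * pdy (pdy u) p + Complex.I * (μ : ℂ) * pdy u p

namespace Stmt5Aux

def pd (v : ℝ × ℝ) (f : ℝ × ℝ → ℂ) (p : ℝ × ℝ) : ℂ := fderiv ℝ f p v

lemma pdx_eq (f : ℝ × ℝ → ℂ) : pdx f = pd (1, 0) f := rfl
lemma pdy_eq (f : ℝ × ℝ → ℂ) : pdy f = pd (0, 1) f := rfl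

lemma contDiff_pd (v : ℝ × ℝ) {u : ℝ × ℝ → ℂ} (hu : ContDiff ℝ (⊤ : ℕ∞) u) :
    ContDiff ℝ (⊤ : ℕ∞) (pd v u) :=
  (ContinuousLinearMap.apply ℝ ℂ v).contDiff.comp (hu.fderiv_right (by simp))

lemma hcs_pd (v : ℝ × ℝ) {u : ℝ × ℝ → ℂ} (hs : HasCompactSupport u) :
    HasCompactSupport (pd v u) :=
  hs.fderiv_apply ℝ v

lemma pd_mul (v : ℝ × ℝ) {f g : ℝ × ℝ → ℂ} (hf : ContDiff ℝ (⊤ : ℕ∞) f) (hg : ContDiff ℝ (⊤ : ℕ∞) g)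
    (p : ℝ × ℝ) :
    pd v (fun q => f q * g q) p = pd v f p * g p + f p * pd v g p := by
  have hf' := (hf.differentiable (by simp)).differentiableAt (x := p)
  have hg' := (hg.differentiable (by simp)).differentiableAt (x := p)
  have := fderiv_fun_mul hf' hg'
  simp only [pd, this, ContinuousLinearMap.add_apply, ContinuousLinearMap.smul_apply,
    smul_eq_mul]
  ring

-- 1D : integral of a derivative of a compactly supported C¹ function is 0
lemma integral_deriv_zero {g : ℝ → ℂ} (hg : ContDiff ℝ (⊤ : ℕ∞) g) (hs : HasCompactSupport g) :
    ∫ x : ℝ, deriv g x = 0 := by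
  have h1 : ContDiff ℝ 1 g := hg.of_le (by simp)
  have hint : Integrable (deriv g) :=
    (hg.continuous_deriv (by simp)).integrable_of_hasCompactSupport hs.deriv
  have h2 := HasCompactSupport.integral_Iic_deriv_eq h1 hs 0
  have h3 := HasCompactSupport.integral_Ioi_deriv_eq h1 hs 0
  rw [← intervalIntegral.integral_Iic_add_Ioi (b := 0) hint.integrableOn hint.integrableOn,
    h2, h3]
  ring

lemma slice_x {u : ℝ × ℝ → ℂ} (hu : ContDiff ℝ (⊤ : ℕ∞) u) (x y : ℝ) :
    deriv (fun t => u (t, y)) x = pd (1, 0) u (x, y) := by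
  have hd : HasDerivAt (fun t : ℝ => (t, y)) ((1 : ℝ), (0 : ℝ)) x :=
    HasDerivAt.prodMk (hasDerivAt_id x) (hasDerivAt_const x y)
  exact ((((hu.differentiable (by simp)) (x, y)).hasFDerivAt).comp_hasDerivAt x hd).deriv

lemma slice_y {u : ℝ × ℝ → ℂ} (hu : ContDiff ℝ (⊤ : ℕ∞) u) (x y : ℝ) :
    deriv (fun t => u (x, t)) y = pd (0, 1) u (x, y) := by
  have hd : HasDerivAt (fun t : ℝ => (x, t)) ((0 : ℝ), (1 : ℝ)) y :=
    HasDerivAt.prodMk (hasDerivAt_const y x) (hasDerivAt_id y)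
  exact ((((hu.differentiable (by simp)) (x, y)).hasFDerivAt).comp_hasDerivAt y hd).deriv

lemma hcs_slice_x {u : ℝ × ℝ → ℂ} (hs : HasCompactSupport u) (y : ℝ) :
    HasCompactSupport (fun t => u (t, y)) := by
  apply HasCompactSupport.intro (hs.isCompact.image continuous_fst)
  intro t ht
  by_contra h
  exact ht ⟨(t, y), subset_tsupport u h, rfl⟩

lemma hcs_slice_y {u : ℝ × ℝ → ℂ} (hs : HasCompactSupport u) (x : ℝ) :
    HasCompactSupport (fun t => u (x, t)) := by
  apply HasCompactSupport.intro (hs.isCompact.image continuous_snd)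
  intro t ht
  by_contra h
  exact ht ⟨(x, t), subset_tsupport u h, rfl⟩

lemma contDiff_slice_x {u : ℝ × ℝ → ℂ} (hu : ContDiff ℝ (⊤ : ℕ∞) u) (y : ℝ) :
    ContDiff ℝ (⊤ : ℕ∞) (fun t => u (t, y)) :=
  hu.comp (contDiff_id.prodMk contDiff_const)

lemma contDiff_slice_y {u : ℝ × ℝ → ℂ} (hu : ContDiff ℝ (⊤ : ℕ∞) u) (x : ℝ) :
    ContDiff ℝ (⊤ : ℕ∞) (fun t => u (x, t)) :=
  hu.comp (contDiff_const.prodMk contDiff_id)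

lemma integral_pdx_zero {u : ℝ × ℝ → ℂ} (hu : ContDiff ℝ (⊤ : ℕ∞) u) (hs : HasCompactSupport u) :
    ∫ p : ℝ × ℝ, pd (1, 0) u p = 0 := by
  have hint : Integrable (pd (1, 0) u) volume :=
    ((contDiff_pd _ hu).continuous).integrable_of_hasCompactSupport (hcs_pd _ hs)
  rw [Measure.volume_eq_prod] at hint ⊢
  rw [integral_prod_symm _ hint]
  have h0 : ∀ y : ℝ, ∫ x : ℝ, pd (1, 0) u (x, y) = 0 := by
    intro y
    have := integral_deriv_zero (contDiff_slice_x hu y) (hcs_slice_x hs y)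
    simpa only [slice_x hu] using this
  simp [h0]

lemma integral_pdy_zero {u : ℝ × ℝ → ℂ} (hu : ContDiff ℝ (⊤ : ℕ∞) u) (hs : HasCompactSupport u) :
    ∫ p : ℝ × ℝ, pd (0, 1) u p = 0 := by
  have hint : Integrable (pd (0, 1) u) volume :=
    ((contDiff_pd _ hu).continuous).integrable_of_hasCompactSupport (hcs_pd _ hs)
  rw [Measure.volume_eq_prod] at hint ⊢
  rw [integral_prod _ hint]
  have h0 : ∀ x : ℝ, ∫ y : ℝ, pd (0, 1) u (x, y) = 0 := by
    intro x
    have := integral_deriv_zero (contDiff_slice_y hu x) (hcs_slice_y hs x)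
    simpa only [slice_y hu] using this
  simp [h0]

lemma ibp (v : ℝ × ℝ)
    (hzero : ∀ (h : ℝ × ℝ → ℂ), ContDiff ℝ (⊤ : ℕ∞) h → HasCompactSupport h →
      ∫ p : ℝ × ℝ, pd v h p = 0)
    {f g : ℝ × ℝ → ℂ} (hf : ContDiff ℝ (⊤ : ℕ∞) f) (hg : ContDiff ℝ (⊤ : ℕ∞) g)
    (hsf : HasCompactSupport f) :
    ∫ p : ℝ × ℝ, f p * pd v g p = - ∫ p : ℝ × ℝ, pd v f p * g p := by
  have hfg : ContDiff ℝ (⊤ : ℕ∞) (fun q => f q * g q) := hf.mul hg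
  have hsfg : HasCompactSupport (fun q => f q * g q) := by
    apply HasCompactSupport.intro hsf.isCompact
    intro p hp
    have : f p = 0 := by
      by_contra h
      exact hp (subset_tsupport f h)
    simp [this]
  have h0 := hzero _ hfg hsfg
  have hint1 : Integrable (fun p => pd v f p * g p) volume := by
    apply Continuous.integrable_of_hasCompactSupport
    · exact ((contDiff_pd v hf).continuous).mul hg.continuous
    · exact ((hcs_pd v hsf)).mul_right
  have hint2 : Integrable (fun p => f p * pd v g p) volume := by
    apply Continuous.integrable_of_hasCompactSupport
    · exact hf.continuous.mul (contDiff_pd v hg).continuous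
    · exact hsf.mul_right
  have hsum : ∫ p : ℝ × ℝ, (pd v f p * g p + f p * pd v g p) = 0 := by
    rw [← h0]; congr 1; ext p; rw [pd_mul v hf hg]
  rw [integral_add hint1 hint2] at hsum
  exact eq_neg_of_add_eq_zero_right hsum

lemma ibp_x {f g : ℝ × ℝ → ℂ} (hf : ContDiff ℝ (⊤ : ℕ∞) f) (hg : ContDiff ℝ (⊤ : ℕ∞) g)
    (hsf : HasCompactSupport f) :
    ∫ p : ℝ × ℝ, f p * pd (1, 0) g p = - ∫ p : ℝ × ℝ, pd (1, 0) f p * g p :=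
  ibp (1, 0) (fun _ h1 h2 => integral_pdx_zero h1 h2) hf hg hsf

lemma ibp_y {f g : ℝ × ℝ → ℂ} (hf : ContDiff ℝ (⊤ : ℕ∞) f) (hg : ContDiff ℝ (⊤ : ℕ∞) g)
    (hsf : HasCompactSupport f) :
    ∫ p : ℝ × ℝ, f p * pd (0, 1) g p = - ∫ p : ℝ × ℝ, pd (0, 1) f p * g p :=
  ibp (0, 1) (fun _ h1 h2 => integral_pdy_zero h1 h2) hf hg hsf

lemma contDiff_conj {u : ℝ × ℝ → ℂ} (hu : ContDiff ℝ (⊤ : ℕ∞) u) :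
    ContDiff ℝ (⊤ : ℕ∞) (fun p => (starRingEnd ℂ) (u p)) :=
  Complex.conjCLE.contDiff.comp hu

lemma hcs_conj {u : ℝ × ℝ → ℂ} (hs : HasCompactSupport u) :
    HasCompactSupport (fun p => (starRingEnd ℂ) (u p)) := by
  apply HasCompactSupport.intro hs.isCompact
  intro p hp
  have : u p = 0 := by
    by_contra h
    exact hp (subset_tsupport u h)
  simp [this]

lemma pd_conj (v : ℝ × ℝ) {u : ℝ × ℝ → ℂ} (hu : ContDiff ℝ (⊤ : ℕ∞) u) (p : ℝ × ℝ) :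
    pd v (fun q => (starRingEnd ℂ) (u q)) p = (starRingEnd ℂ) (pd v u p) := by
  have h1 : HasFDerivAt u (fderiv ℝ u p) p :=
    ((hu.differentiable (by simp)) p).hasFDerivAt
  have h2 := (Complex.conjCLE.toContinuousLinearMap.hasFDerivAt (x := u p)).comp p h1
  have h2' : HasFDerivAt (fun q => (starRingEnd ℂ) (u q))
      (Complex.conjCLE.toContinuousLinearMap.comp (fderiv ℝ u p)) p := h2
  have h3 : pd v (fun q => (starRingEnd ℂ) (u q)) p
      = (Complex.conjCLE.toContinuousLinearMap.comp (fderiv ℝ u p)) v := by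
    rw [pd, h2'.fderiv]
  simpa [pd] using h3

lemma pd_pd (v w : ℝ × ℝ) {u : ℝ × ℝ → ℂ} (hu : ContDiff ℝ (⊤ : ℕ∞) u) (p : ℝ × ℝ) :
    pd w (pd v u) p = fderiv ℝ (fderiv ℝ u) p w v := by
  have hd : DifferentiableAt ℝ (fderiv ℝ u) p :=
    ((hu.fderiv_right (m := 1) (WithTop.coe_le_coe.mpr le_top)).differentiable one_ne_zero) p
  have h2 := ((ContinuousLinearMap.apply ℝ ℂ v).hasFDerivAt (x := fderiv ℝ u p)).comp p
    hd.hasFDerivAt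
  have h3 : pd w (pd v u) p
      = ((ContinuousLinearMap.apply ℝ ℂ v).comp (fderiv ℝ (fderiv ℝ u) p)) w := by
    rw [pd]
    exact congrFun (congrArg _ h2.fderiv) w
  simpa using h3

lemma pd_comm {u : ℝ × ℝ → ℂ} (hu : ContDiff ℝ (⊤ : ℕ∞) u) (p : ℝ × ℝ) :
    pd (1, 0) (pd (0, 1) u) p = pd (0, 1) (pd (1, 0) u) p := by
  rw [pd_pd _ _ hu, pd_pd _ _ hu]
  exact (hu.contDiffAt.isSymmSndFDerivAt (by rw [minSmoothness_of_isRCLikeNormedField]; exact WithTop.coe_le_coe.mpr le_top) (1, 0) (0, 1)).symm ▸ rfl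

def X (p : ℝ × ℝ) : ℂ := (p.1 : ℂ)

lemma contDiff_X : ContDiff ℝ (⊤ : ℕ∞) X :=
  Complex.ofRealCLM.contDiff.comp contDiff_fst

lemma hasFDerivAt_X (p : ℝ × ℝ) :
    HasFDerivAt X (Complex.ofRealCLM.comp (ContinuousLinearMap.fst ℝ ℝ ℝ)) p :=
  (Complex.ofRealCLM.hasFDerivAt).comp p (hasFDerivAt_fst)

lemma pd_X (v : ℝ × ℝ) (p : ℝ × ℝ) : pd v X p = (v.1 : ℂ) := by
  rw [pd, (hasFDerivAt_X p).fderiv]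
  simp

lemma inner_self (f : ℝ × ℝ → ℂ) :
    ∫ p : ℝ × ℝ, (starRingEnd ℂ) (f p) * f p = ((∫ p : ℝ × ℝ, ‖f p‖ ^ 2 : ℝ) : ℂ) := by
  have h1 : ∀ p : ℝ × ℝ, (starRingEnd ℂ) (f p) * f p = ((‖f p‖ ^ 2 : ℝ) : ℂ) := by
    intro p
    rw [mul_comm, Complex.mul_conj]
    norm_cast
    rw [Complex.normSq_eq_norm_sq]
  simp only [h1]
  exact integral_ofReal

end Stmt5Aux

open Stmt5Aux in
theorem stmt_5 (μ : ℝ) (hμ : |μ| < 1) (u : ℝ × ℝ → ℂ) (hu : ContDiff ℝ (⊤ : ℕ∞) u) (hsupp : HasCompactSupport u) :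
    (1 - |μ|) * (normL2sq (pdx u) + normL2sq (fun p => (p.1 : ℂ) * pdy u p))
      ≤ (innerL2 (opA μ u) u).re := by
  set C : ℝ × ℝ → ℂ := fun p => (starRingEnd ℂ) (u p) with hCdef
  have huC : ContDiff ℝ (⊤ : ℕ∞) C := contDiff_conj hu
  have hsC : HasCompactSupport C := hcs_conj hsupp
  have hu1 : ContDiff ℝ (⊤ : ℕ∞) (pd (1, 0) u) := contDiff_pd _ hu
  have hu2 : ContDiff ℝ (⊤ : ℕ∞) (pd (0, 1) u) := contDiff_pd _ hu
  have hs1 : HasCompactSupport (pd (1, 0) u) := hcs_pd _ hsupp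
  have hs2 : HasCompactSupport (pd (0, 1) u) := hcs_pd _ hsupp
  set W : ℝ × ℝ → ℂ := fun p => X p * pd (0, 1) u p with hWdef
  have huW : ContDiff ℝ (⊤ : ℕ∞) W := contDiff_X.mul hu2
  have hsW : HasCompactSupport W := hs2.mul_left
  set N1 : ℝ := normL2sq (pdx u) with hN1
  set N2 : ℝ := normL2sq (fun p => (p.1 : ℂ) * pdy u p) with hN2
  have hN1' : N1 = ∫ p : ℝ × ℝ, ‖pd (1, 0) u p‖ ^ 2 := rfl
  have hN2' : N2 = ∫ p : ℝ × ℝ, ‖W p‖ ^ 2 := rfl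
  -- Claim A
  have hpdC : ∀ p, pd (1, 0) C p = (starRingEnd ℂ) (pd (1, 0) u p) := pd_conj _ hu
  have hpdC2 : ∀ p, pd (0, 1) C p = (starRingEnd ℂ) (pd (0, 1) u p) := pd_conj _ hu
  have claimA : ∫ p : ℝ × ℝ, C p * pd (1, 0) (pd (1, 0) u) p = -(N1 : ℂ) := by
    rw [ibp_x huC hu1 hsC]
    have h1 : (fun p : ℝ × ℝ => pd (1, 0) C p * pd (1, 0) u p)
        = fun p : ℝ × ℝ => (starRingEnd ℂ) (pd (1, 0) u p) * pd (1, 0) u p := by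
      ext p; rw [hpdC]
    rw [h1, inner_self, hN1']
  -- Claim B
  have hXXC : ContDiff ℝ (⊤ : ℕ∞) (fun p : ℝ × ℝ => X p * X p * C p) :=
    (contDiff_X.mul contDiff_X).mul huC
  have hsXXC : HasCompactSupport (fun p : ℝ × ℝ => X p * X p * C p) := hsC.mul_left
  have claimB : ∫ p : ℝ × ℝ, (X p * X p * C p) * pd (0, 1) (pd (0, 1) u) p = -(N2 : ℂ) := by
    rw [ibp_y hXXC hu2 hsXXC]
    have h1 : ∀ p : ℝ × ℝ, pd (0, 1) (fun q => (fun r => X r * X r) q * C q) p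
        = pd (0, 1) (fun r => X r * X r) p * C p + (X p * X p) * pd (0, 1) C p :=
      pd_mul _ (contDiff_X.mul contDiff_X) huC
    have h2 : ∀ p : ℝ × ℝ, pd (0, 1) (fun r => X r * X r) p
        = pd (0, 1) X p * X p + X p * pd (0, 1) X p := pd_mul _ contDiff_X contDiff_X
    have h3 : (fun p : ℝ × ℝ => pd (0, 1) (fun q => X q * X q * C q) p * pd (0, 1) u p)
        = fun p : ℝ × ℝ => (starRingEnd ℂ) (W p) * W p := by
      ext p
      have e1 : pd (0, 1) (fun q => X q * X q * C q) p
          = pd (0, 1) (fun r => X r * X r) p * C p + (X p * X p) * pd (0, 1) C p := h1 p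
      rw [e1, h2 p, pd_X, hpdC2]
      simp only [hWdef, map_mul, X]
      rw [Complex.conj_ofReal]
      push_cast
      ring
    rw [h3, inner_self, hN2']
  -- Claim C
  set c : ℂ := ∫ p : ℝ × ℝ, C p * pd (0, 1) u p with hcdef
  set w : ℂ := ∫ p : ℝ × ℝ, (starRingEnd ℂ) (pd (1, 0) u p) * W p with hwdef
  have hXC : ContDiff ℝ (⊤ : ℕ∞) (fun p : ℝ × ℝ => X p * C p) := contDiff_X.mul huC
  have hsXC : HasCompactSupport (fun p : ℝ × ℝ => X p * C p) := hsC.mul_left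
  have claimC : c = -w + (starRingEnd ℂ) w := by
    have hptw : ∀ p : ℝ × ℝ, C p * pd (0, 1) u p
        = C p * pd (1, 0) W p - (X p * C p) * pd (0, 1) (pd (1, 0) u) p := by
      intro p
      have h1 : pd (1, 0) W p = pd (1, 0) X p * pd (0, 1) u p + X p * pd (1, 0) (pd (0, 1) u) p :=
        pd_mul _ contDiff_X hu2 p
      rw [h1, pd_X, pd_comm hu p]
      push_cast
      ring
    have int1 : Integrable (fun p : ℝ × ℝ => C p * pd (1, 0) W p) volume := by
      apply Continuous.integrable_of_hasCompactSupport
      · exact huC.continuous.mul (contDiff_pd _ huW).continuous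
      · exact hsC.mul_right
    have int2 : Integrable (fun p : ℝ × ℝ => (X p * C p) * pd (0, 1) (pd (1, 0) u) p) volume := by
      apply Continuous.integrable_of_hasCompactSupport
      · exact hXC.continuous.mul (contDiff_pd _ hu1).continuous
      · exact hsXC.mul_right
    have hsplit : c = (∫ p : ℝ × ℝ, C p * pd (1, 0) W p)
        - ∫ p : ℝ × ℝ, (X p * C p) * pd (0, 1) (pd (1, 0) u) p := by
      rw [hcdef, ← integral_sub int1 int2]
      congr 1; ext p; rw [hptw p]
    have hterm1 : ∫ p : ℝ × ℝ, C p * pd (1, 0) W p = -w := by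
      rw [ibp_x huC huW hsC, hwdef]
      congr 1; congr 1; ext p; rw [hpdC]
    have hterm2 : ∫ p : ℝ × ℝ, (X p * C p) * pd (0, 1) (pd (1, 0) u) p
        = -(starRingEnd ℂ) w := by
      rw [ibp_y hXC hu1 hsXC]
      have h1 : (fun p : ℝ × ℝ => pd (0, 1) (fun q => X q * C q) p * pd (1, 0) u p)
          = fun p : ℝ × ℝ => (starRingEnd ℂ) ((starRingEnd ℂ) (pd (1, 0) u p) * W p) := by
        ext p
        have e1 : pd (0, 1) (fun q => X q * C q) p
            = pd (0, 1) X p * C p + X p * pd (0, 1) C p := pd_mul _ contDiff_X huC p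
        rw [e1, pd_X, hpdC2]
        simp only [hWdef, map_mul, X, RingHomCompTriple.comp_apply, RingHom.id_apply]
        rw [Complex.conj_ofReal]
        push_cast
        ring
      rw [h1, integral_conj, ← hwdef]
    rw [hsplit, hterm1, hterm2]
    ring
  -- Claim D
  have intn1 : Integrable (fun p : ℝ × ℝ => ‖pd (1, 0) u p‖ ^ 2) volume := by
    apply Continuous.integrable_of_hasCompactSupport
    · exact (hu1.continuous.norm).pow 2
    · exact hs1.comp_left (g := fun z : ℂ => ‖z‖ ^ 2) (by simp)
  have intn2 : Integrable (fun p : ℝ × ℝ => ‖W p‖ ^ 2) volume := by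
    apply Continuous.integrable_of_hasCompactSupport
    · exact (huW.continuous.norm).pow 2
    · exact hsW.comp_left (g := fun z : ℂ => ‖z‖ ^ 2) (by simp)
  have claimD : ‖w‖ ≤ (N1 + N2) / 2 := by
    have hb := norm_integral_le_integral_norm (fun p : ℝ × ℝ => (starRingEnd ℂ) (pd (1, 0) u p) * W p) (μ := volume)
    have hmono : (∫ p : ℝ × ℝ, ‖(starRingEnd ℂ) (pd (1, 0) u p) * W p‖)
        ≤ ∫ p : ℝ × ℝ, (‖pd (1, 0) u p‖ ^ 2 + ‖W p‖ ^ 2) / 2 := by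
      apply integral_mono
      · apply Continuous.integrable_of_hasCompactSupport
        · exact ((Complex.continuous_conj.comp hu1.continuous).mul huW.continuous).norm
        · exact (hsW.mul_left).comp_left (g := fun z : ℂ => ‖z‖) (by simp)
      · exact (intn1.add intn2).div_const 2
      · intro p
        simp only
        rw [norm_mul, RCLike.norm_conj]
        nlinarith [sq_nonneg (‖pd (1, 0) u p‖ - ‖W p‖)]
    have hsum : (∫ p : ℝ × ℝ, (‖pd (1, 0) u p‖ ^ 2 + ‖W p‖ ^ 2) / 2) = (N1 + N2) / 2 := by
      rw [integral_div, integral_add intn1 intn2, hN1', hN2']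
    calc ‖w‖ ≤ ∫ p : ℝ × ℝ, ‖(starRingEnd ℂ) (pd (1, 0) u p) * W p‖ := hb
    _ ≤ ∫ p : ℝ × ℝ, (‖pd (1, 0) u p‖ ^ 2 + ‖W p‖ ^ 2) / 2 := hmono
    _ = (N1 + N2) / 2 := hsum
  -- assemble
  have hinner : innerL2 (opA μ u) u = (N1 : ℂ) + (N2 : ℂ) + (Complex.I * (μ : ℂ)) * c := by
    have hfun : (fun p : ℝ × ℝ => (starRingEnd ℂ) (u p) * opA μ u p)
        = fun p : ℝ × ℝ => (-(C p * pd (1, 0) (pd (1, 0) u) p)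
            + -((X p * X p * C p) * pd (0, 1) (pd (0, 1) u) p))
            + (Complex.I * (μ : ℂ)) * (C p * pd (0, 1) u p) := by
      ext p
      simp only [opA, pdx_eq, pdy_eq, hCdef, X]
      push_cast
      ring
    have intT1 : Integrable (fun p : ℝ × ℝ => C p * pd (1, 0) (pd (1, 0) u) p) volume := by
      apply Continuous.integrable_of_hasCompactSupport
      · exact huC.continuous.mul (contDiff_pd _ (contDiff_pd _ hu)).continuous
      · exact hsC.mul_right
    have intT2 : Integrable (fun p : ℝ × ℝ => (X p * X p * C p) * pd (0, 1) (pd (0, 1) u) p) volume := by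
      apply Continuous.integrable_of_hasCompactSupport
      · exact hXXC.continuous.mul (contDiff_pd _ (contDiff_pd _ hu)).continuous
      · exact hsXXC.mul_right
    have intT3 : Integrable (fun p : ℝ × ℝ => (Complex.I * (μ : ℂ)) * (C p * pd (0, 1) u p)) volume := by
      apply Integrable.const_mul
      apply Continuous.integrable_of_hasCompactSupport
      · exact huC.continuous.mul hu2.continuous
      · exact hsC.mul_right
    have i12 : Integrable (fun p : ℝ × ℝ => -(C p * pd (1, 0) (pd (1, 0) u) p)
        + -(X p * X p * C p * pd (0, 1) (pd (0, 1) u) p)) volume := intT1.neg'.add intT2.neg'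
    rw [innerL2, hfun, integral_add i12 intT3,
      integral_add intT1.neg' intT2.neg', integral_neg, integral_neg, claimA, claimB,
      integral_const_mul, ← hcdef]
    push_cast
    ring
  have hre : (innerL2 (opA μ u) u).re = N1 + N2 + 2 * μ * w.im := by
    rw [hinner, claimC]
    simp only [Complex.add_re, Complex.mul_re, Complex.mul_im, Complex.I_re, Complex.I_im,
      Complex.ofReal_re, Complex.ofReal_im, Complex.neg_re, Complex.neg_im, Complex.add_im,
      Complex.conj_re, Complex.conj_im]
    ring
  rw [hre]
  have habs : |w.im| ≤ ‖w‖ := Complex.abs_im_le_norm w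
  have h1 : |μ * w.im| ≤ |μ| * ‖w‖ := by
    rw [abs_mul]
    exact mul_le_mul_of_nonneg_left habs (abs_nonneg μ)
  have h2 := neg_abs_le (μ * w.im)
  have h3 : (0 : ℝ) ≤ |μ| := abs_nonneg μ
  nlinarith

end
end

section
/- For the first-order operator L_a = ∂_t + A∂_x + xB∂_y with A = [[0,1,0],[1,0,0],[0,0,0]], B = [[0,a,1],[−a,0,0],[(1+a²),0,0]], if U = (u,v,w) satisfies L_a U = 0, then u satisfies the second-order scalar equation ∂_t²u − ∂_x²u − x²∂_y²u + a∂_y u = 0. -/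
noncomputable section

/-- `∂_t` for functions of `(t, x, y) ∈ ℝ³`. -/
def pt (f : ℝ × ℝ × ℝ → ℂ) (p : ℝ × ℝ × ℝ) : ℂ := fderiv ℝ f p (1, 0, 0)

/-- `∂_x` for functions of `(t, x, y) ∈ ℝ³`. -/
def px (f : ℝ × ℝ × ℝ → ℂ) (p : ℝ × ℝ × ℝ) : ℂ := fderiv ℝ f p (0, 1, 0)

/-- `∂_y` for functions of `(t, x, y) ∈ ℝ³`. -/
def py (f : ℝ × ℝ × ℝ → ℂ) (p : ℝ × ℝ × ℝ) : ℂ := fderiv ℝ f p (0, 0, 1)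

namespace Stmt6Aux

/-- The coordinate `x` as a continuous linear map `ℝ³ →L[ℝ] ℂ`. -/
def Xc : (ℝ × ℝ × ℝ) →L[ℝ] ℂ :=
  Complex.ofRealCLM.comp
    ((ContinuousLinearMap.fst ℝ ℝ ℝ).comp (ContinuousLinearMap.snd ℝ ℝ (ℝ × ℝ)))

@[simp] lemma Xc_apply (q : ℝ × ℝ × ℝ) : Xc q = (q.2.1 : ℂ) := rfl

lemma contDiff_dir {f : ℝ × ℝ × ℝ → ℂ} (hf : ContDiff ℝ (⊤ : ℕ∞) f) (d : ℝ × ℝ × ℝ) :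
    ContDiff ℝ (⊤ : ℕ∞) (fun q => fderiv ℝ f q d) :=
  (ContinuousLinearMap.apply ℝ ℂ d).contDiff.comp (hf.fderiv_right (by simp))

lemma diff_dir {f : ℝ × ℝ × ℝ → ℂ} (hf : ContDiff ℝ (⊤ : ℕ∞) f) (d p : ℝ × ℝ × ℝ) :
    DifferentiableAt ℝ (fun q => fderiv ℝ f q d) p :=
  ((contDiff_dir hf d).differentiable (by simp)) p

/-- Symmetry of second derivatives, directional form. -/
lemma dir_comm {f : ℝ × ℝ × ℝ → ℂ} (hf : ContDiff ℝ (⊤ : ℕ∞) f) (p d1 d2 : ℝ × ℝ × ℝ) :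
    fderiv ℝ (fun q => fderiv ℝ f q d1) p d2
      = fderiv ℝ (fun q => fderiv ℝ f q d2) p d1 := by
  have hf' : ContDiff ℝ (⊤ : ℕ∞) (fderiv ℝ f) := hf.fderiv_right (by simp)
  have hd : ∀ y, HasFDerivAt f (fderiv ℝ f y) y := fun y =>
    (hf.differentiable (by simp) y).hasFDerivAt
  have h2 : HasFDerivAt (fderiv ℝ f) (fderiv ℝ (fderiv ℝ f) p) p :=
    (hf'.differentiable (by simp) p).hasFDerivAt
  have key : ∀ e1 e2 : ℝ × ℝ × ℝ, fderiv ℝ (fun q => fderiv ℝ f q e1) p e2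
      = fderiv ℝ (fderiv ℝ f) p e2 e1 := by
    intro e1 e2
    rw [fderiv_clm_apply (hf'.differentiable (by simp) p) (differentiableAt_const e1)]
    simp
  rw [key, key, second_derivative_symmetric hd h2]

/-- Directional derivative of the canonical combination appearing in the system. -/
lemma key (c1 c2 c3 : ℂ) {g1 g2 g3 : ℝ × ℝ × ℝ → ℂ}
    (h1 : Differentiable ℝ g1) (h2 : Differentiable ℝ g2) (h3 : Differentiable ℝ g3)
    (p d : ℝ × ℝ × ℝ) :
    fderiv ℝ (fun q => c1 * g1 q + c2 * ((q.2.1 : ℂ) * g2 q)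
        + c3 * ((q.2.1 : ℂ) * g3 q)) p d
      = c1 * fderiv ℝ g1 p d
        + c2 * ((d.2.1 : ℂ) * g2 p + (p.2.1 : ℂ) * fderiv ℝ g2 p d)
        + c3 * ((d.2.1 : ℂ) * g3 p + (p.2.1 : ℂ) * fderiv ℝ g3 p d) := by
  have hX : HasFDerivAt (fun q : ℝ × ℝ × ℝ => ((q.2.1 : ℝ) : ℂ)) Xc p :=
    Xc.hasFDerivAt
  have H : HasFDerivAt
      (fun q => c1 * g1 q + c2 * ((q.2.1 : ℂ) * g2 q) + c3 * ((q.2.1 : ℂ) * g3 q))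
      ((c1 • fderiv ℝ g1 p
        + c2 • ((p.2.1 : ℂ) • fderiv ℝ g2 p + g2 p • Xc))
        + c3 • ((p.2.1 : ℂ) • fderiv ℝ g3 p + g3 p • Xc)) p :=
    (((h1 p).hasFDerivAt.const_mul c1).add
      ((hX.mul (h2 p).hasFDerivAt).const_mul c2)).add
      ((hX.mul (h3 p).hasFDerivAt).const_mul c3)
  rw [H.fderiv]
  simp only [ContinuousLinearMap.add_apply, ContinuousLinearMap.smul_apply,
    smul_eq_mul, Xc_apply]
  ring

end Stmt6Aux

open Stmt6Aux in
/-- If `U = (u,v,w)` solves the first-order system `L_a U = 0`, then `u` solves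
`∂_t²u − ∂_x²u − x²∂_y²u + a∂_y u = 0`. -/
theorem stmt_6 (a : ℂ) (u v w : ℝ × ℝ × ℝ → ℂ)
    (hu : ContDiff ℝ (⊤ : ℕ∞) u) (hv : ContDiff ℝ (⊤ : ℕ∞) v) (hw : ContDiff ℝ (⊤ : ℕ∞) w)
    (h1 : ∀ p : ℝ × ℝ × ℝ,
      pt u p + (px v p + a * (p.2.1 : ℂ) * py v p) + (p.2.1 : ℂ) * py w p = 0)
    (h2 : ∀ p : ℝ × ℝ × ℝ,
      pt v p + (px u p - a * (p.2.1 : ℂ) * py u p) = 0)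
    (h3 : ∀ p : ℝ × ℝ × ℝ,
      pt w p + (1 + a ^ 2) * (p.2.1 : ℂ) * py u p = 0) :
    ∀ p : ℝ × ℝ × ℝ,
      pt (pt u) p - px (px u) p - (p.2.1 : ℂ) ^ 2 * py (py u) p + a * py u p = 0 := by
  have dpxu : Differentiable ℝ (px u) := (contDiff_dir hu (0,1,0)).differentiable (by simp)
  have dpyu : Differentiable ℝ (py u) := (contDiff_dir hu (0,0,1)).differentiable (by simp)
  have dpxv : Differentiable ℝ (px v) := (contDiff_dir hv (0,1,0)).differentiable (by simp)
  have dpyv : Differentiable ℝ (py v) := (contDiff_dir hv (0,0,1)).differentiable (by simp)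
  have dpyw : Differentiable ℝ (py w) := (contDiff_dir hw (0,0,1)).differentiable (by simp)
  have e1 : pt u = fun q => (-1 : ℂ) * px v q + (-a) * ((q.2.1 : ℂ) * py v q)
      + (-1 : ℂ) * ((q.2.1 : ℂ) * py w q) := by
    funext q; linear_combination h1 q
  have e2 : pt v = fun q => (-1 : ℂ) * px u q + a * ((q.2.1 : ℂ) * py u q)
      + (0 : ℂ) * ((q.2.1 : ℂ) * py u q) := by
    funext q; linear_combination h2 q
  have e3 : pt w = fun q => (0 : ℂ) * px u q + (-(1 + a ^ 2)) * ((q.2.1 : ℂ) * py u q)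
      + (0 : ℂ) * ((q.2.1 : ℂ) * py u q) := by
    funext q; linear_combination h3 q
  intro p
  have B1 : fderiv ℝ (pt u) p (1,0,0)
      = -fderiv ℝ (px v) p (1,0,0) - a * ((p.2.1 : ℂ) * fderiv ℝ (py v) p (1,0,0))
        - (p.2.1 : ℂ) * fderiv ℝ (py w) p (1,0,0) := by
    rw [e1, key (-1) (-a) (-1) dpxv dpyv dpyw p (1,0,0)]
    norm_num
    ring
  have B2 : fderiv ℝ (px v) p (1,0,0) = fderiv ℝ (pt v) p (0,1,0) :=
    dir_comm hv p (0,1,0) (1,0,0)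
  have B5 : fderiv ℝ (py v) p (1,0,0) = fderiv ℝ (pt v) p (0,0,1) :=
    dir_comm hv p (0,0,1) (1,0,0)
  have B6 : fderiv ℝ (py w) p (1,0,0) = fderiv ℝ (pt w) p (0,0,1) :=
    dir_comm hw p (0,0,1) (1,0,0)
  have B3 : fderiv ℝ (pt v) p (0,1,0)
      = -fderiv ℝ (px u) p (0,1,0)
        + a * (py u p + (p.2.1 : ℂ) * fderiv ℝ (py u) p (0,1,0)) := by
    rw [e2, key (-1) a 0 dpxu dpyu dpyu p (0,1,0)]
    norm_num
  have B4 : fderiv ℝ (pt v) p (0,0,1)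
      = -fderiv ℝ (px u) p (0,0,1)
        + a * ((p.2.1 : ℂ) * fderiv ℝ (py u) p (0,0,1)) := by
    rw [e2, key (-1) a 0 dpxu dpyu dpyu p (0,0,1)]
    norm_num
  have B7 : fderiv ℝ (pt w) p (0,0,1)
      = -((1 + a ^ 2) * ((p.2.1 : ℂ) * fderiv ℝ (py u) p (0,0,1))) := by
    rw [e3, key 0 (-(1 + a ^ 2)) 0 dpxu dpyu dpyu p (0,0,1)]
    norm_num
    ring
  have B8 : fderiv ℝ (px u) p (0,0,1) = fderiv ℝ (py u) p (0,1,0) :=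
    dir_comm hu p (0,1,0) (0,0,1)
  show fderiv ℝ (pt u) p (1,0,0) - fderiv ℝ (px u) p (0,1,0)
      - (p.2.1 : ℂ) ^ 2 * fderiv ℝ (py u) p (0,0,1) + a * py u p = 0
  rw [B1, B2, B5, B6, B3, B4, B7, B8]
  ring
end
end

section
/- Let a ∈ ℂ, β ∈ ℂ with β² + i·conj(a) = 1 (respectively β² − i·conj(a) = 1), and η > 0. Define the ℂ³-valued function W^±(t,x,y) = exp(iβηt ± iyη² − η²x²/2)(W₀ + ηx W₁) with W₀ = (1,0,0)ᵀ and W₁ = (0, −i(1 ∓ i·conj(a))/β, ∓1/β)ᵀ (assuming β ≠ 0). Then L_a* W^± = 0, where L_a* = −∂_t − A*∂_x − x B*∂_y with A = [[0,1,0],[1,0,0],[0,0,0]] and B = [[0,a,1],[−a,0,0],[1+a²,0,0]]. -/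
noncomputable section

open Complex

/-- `∂_t` for curried functions of `(t,x,y)`. -/
def dT (f : ℝ → ℝ → ℝ → ℂ) (t x y : ℝ) : ℂ := deriv (fun s => f s x y) t

/-- `∂_x` for curried functions of `(t,x,y)`. -/
def dX (f : ℝ → ℝ → ℝ → ℂ) (t x y : ℝ) : ℂ := deriv (fun s => f t s y) x

/-- `∂_y` for curried functions of `(t,x,y)`. -/
def dY (f : ℝ → ℝ → ℝ → ℂ) (t x y : ℝ) : ℂ := deriv (fun s => f t x s) y

/-- The scalar exponential factor of `W^±`. -/
def Wexp (β ε : ℂ) (η : ℝ) (t x y : ℝ) : ℂ :=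
  Complex.exp (I * β * (η : ℂ) * (t : ℂ) + ε * I * (η : ℂ) ^ 2 * (y : ℂ)
    - (η : ℂ) ^ 2 * (x : ℂ) ^ 2 / 2)

/-- First component of `W^± = exp(iβηt ± iyη² − η²x²/2)(W₀ + ηx W₁)`. -/
def W1 (β ε : ℂ) (η : ℝ) (t x y : ℝ) : ℂ := Wexp β ε η t x y

/-- Second component of `W^±`. -/
def W2 (a β ε : ℂ) (η : ℝ) (t x y : ℝ) : ℂ :=
  Wexp β ε η t x y * ((η : ℂ) * (x : ℂ)) * (-I * (1 - ε * I * (starRingEnd ℂ a)) / β)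

/-- Third component of `W^±`. -/
def W3 (a β ε : ℂ) (η : ℝ) (t x y : ℝ) : ℂ :=
  Wexp β ε η t x y * ((η : ℂ) * (x : ℂ)) * (-ε / β)

/-! Each component of `W^±` is `Wexp` times a function of `x` alone, so `∂_t` and `∂_y` act on it
by the scalars `iβη` and `εiη²`, and each row of `L_a^* W^±` becomes `Wexp` times a polynomial
in `x`. In the first row the constant coefficient vanishes by `β² + εi·ā = 1` and the
`x²`-coefficient by `ε² = 1`; the other two rows vanish identically once `β ≠ 0`. -/

lemma hasDerivAt_ofReal (t : ℝ) : HasDerivAt (fun s : ℝ => (s : ℂ)) 1 t :=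
  (hasDerivAt_id t).ofReal_comp

section Wexp

variable (β ε : ℂ) (η t x y : ℝ)

lemma hasDerivAt_Wexp_t :
    HasDerivAt (fun s : ℝ => Wexp β ε η s x y) (I * β * η * Wexp β ε η t x y) t := by
  have h := ((((hasDerivAt_ofReal t).const_mul (I * β * η)).add_const
    (ε * I * (η : ℂ) ^ 2 * y)).sub_const ((η : ℂ) ^ 2 * (x : ℂ) ^ 2 / 2)).cexp
  exact h.congr_deriv (by simp only [Wexp]; ring)

lemma hasDerivAt_Wexp_x :
    HasDerivAt (fun s : ℝ => Wexp β ε η t s y) (-(η ^ 2 * x) * Wexp β ε η t x y) x := by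
  have h := ((((hasDerivAt_ofReal x).fun_pow 2).const_mul ((η : ℂ) ^ 2)).div_const 2).const_sub
    (I * β * η * t + ε * I * (η : ℂ) ^ 2 * y) |>.cexp
  exact h.congr_deriv (by simp only [Wexp]; ring)

lemma hasDerivAt_Wexp_y :
    HasDerivAt (fun s : ℝ => Wexp β ε η t x s) (ε * I * η ^ 2 * Wexp β ε η t x y) y := by
  have h := ((((hasDerivAt_ofReal y).const_mul (ε * I * (η : ℂ) ^ 2)).const_add
    (I * β * η * t)).sub_const ((η : ℂ) ^ 2 * (x : ℂ) ^ 2 / 2)).cexp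
  exact h.congr_deriv (by simp only [Wexp]; ring)

end Wexp

section Components

variable (a β ε : ℂ) (η t x y : ℝ)

lemma dT_W1 : dT (W1 β ε η) t x y = I * β * η * W1 β ε η t x y :=
  (hasDerivAt_Wexp_t β ε η t x y).deriv

lemma dT_W2 : dT (W2 a β ε η) t x y = I * β * η * W2 a β ε η t x y :=
  (((hasDerivAt_Wexp_t β ε η t x y).mul_const _).mul_const _).deriv.trans
    (by simp only [W2]; ring)

lemma dT_W3 : dT (W3 a β ε η) t x y = I * β * η * W3 a β ε η t x y :=
  (((hasDerivAt_Wexp_t β ε η t x y).mul_const _).mul_const _).deriv.trans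
    (by simp only [W3]; ring)

lemma dY_W1 : dY (W1 β ε η) t x y = ε * I * η ^ 2 * W1 β ε η t x y :=
  (hasDerivAt_Wexp_y β ε η t x y).deriv

lemma dY_W2 : dY (W2 a β ε η) t x y = ε * I * η ^ 2 * W2 a β ε η t x y :=
  (((hasDerivAt_Wexp_y β ε η t x y).mul_const _).mul_const _).deriv.trans
    (by simp only [W2]; ring)

lemma dY_W3 : dY (W3 a β ε η) t x y = ε * I * η ^ 2 * W3 a β ε η t x y :=
  (((hasDerivAt_Wexp_y β ε η t x y).mul_const _).mul_const _).deriv.trans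
    (by simp only [W3]; ring)

lemma dX_W1 : dX (W1 β ε η) t x y = -(η ^ 2 * x) * W1 β ε η t x y :=
  (hasDerivAt_Wexp_x β ε η t x y).deriv

lemma dX_W2 : dX (W2 a β ε η) t x y = Wexp β ε η t x y * (1 - η ^ 2 * x ^ 2) * η *
    (-I * (1 - ε * I * (starRingEnd ℂ a)) / β) :=
  ((((hasDerivAt_Wexp_x β ε η t x y).mul ((hasDerivAt_ofReal x).const_mul (η : ℂ))).mul_const
    _).deriv.trans (by ring))

end Components

theorem stmt_12_general (a β ε : ℂ) (η : ℝ) (hβ : β ≠ 0) (hε : ε = 1 ∨ ε = -1)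
    (h : β ^ 2 + ε * I * (starRingEnd ℂ a) = 1) :
    ∀ t x y : ℝ,
      -- first row of `−∂_t − A^*∂_x − xB^*∂_y` applied to `(W1, W2, W3)`
      (-dT (W1 β ε η) t x y - dX (W2 a β ε η) t x y
        - (x : ℂ) * (-(starRingEnd ℂ a) * dY (W2 a β ε η) t x y
            + (1 + (starRingEnd ℂ a) ^ 2) * dY (W3 a β ε η) t x y) = 0) ∧
      -- second row
      (-dT (W2 a β ε η) t x y - dX (W1 β ε η) t x y
        - (x : ℂ) * (starRingEnd ℂ a) * dY (W1 β ε η) t x y = 0) ∧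
      -- third row
      (-dT (W3 a β ε η) t x y - (x : ℂ) * dY (W1 β ε η) t x y = 0) := by
  intro t x y
  rw [dT_W1, dT_W2, dT_W3, dY_W1, dY_W2, dY_W3, dX_W1, dX_W2]
  simp only [W1, W2, W3]
  have hε2 : ε ^ 2 = 1 := by rcases hε with rfl | rfl <;> norm_num
  set E := Wexp β ε η t x y
  set ā := starRingEnd ℂ a
  refine ⟨?_, ?_, ?_⟩
  · field_simp
    linear_combination I * η * E *
      (-h + η ^ 2 * x ^ 2 * hε2 + η ^ 2 * x ^ 2 * ε ^ 2 * ā ^ 2 * I_sq)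
  · field_simp
    linear_combination η ^ 2 * E * x * (1 - I * ε * ā) * I_sq
  · field_simp
    ring

/-- `L_a^* W^± = 0`, where `L_a^* = −∂_t − A^*∂_x − xB^*∂_y`. -/
theorem stmt_12 (a β ε : ℂ) (η : ℝ) (hη : 0 < η) (hβ : β ≠ 0) (hε : ε = 1 ∨ ε = -1)
    (h : β ^ 2 + ε * I * (starRingEnd ℂ a) = 1) :
    ∀ t x y : ℝ,
      -- first row of `−∂_t − A^*∂_x − xB^*∂_y` applied to `(W1, W2, W3)`
      (-dT (W1 β ε η) t x y - dX (W2 a β ε η) t x y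
        - (x : ℂ) * (-(starRingEnd ℂ a) * dY (W2 a β ε η) t x y
            + (1 + (starRingEnd ℂ a) ^ 2) * dY (W3 a β ε η) t x y) = 0) ∧
      -- second row
      (-dT (W2 a β ε η) t x y - dX (W1 β ε η) t x y
        - (x : ℂ) * (starRingEnd ℂ a) * dY (W1 β ε η) t x y = 0) ∧
      -- third row
      (-dT (W3 a β ε η) t x y - (x : ℂ) * dY (W1 β ε η) t x y = 0) :=
  stmt_12_general a β ε η hβ hε h
end
end

section
/- For a ∈ ℂ, the 3×3 matrix G_a(x,ξ,η) = ξA + xηB with A = [[0,1,0],[1,0,0],[0,0,0]] and B = [[0,a,1],[−a,0,0],[1+a²,0,0]] has eigenvalues 0 and ±√(ξ² + x²η²); in particular, for all real x, ξ, η the eigenvalues of G_a(x,ξ,η) are real. -/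
open Matrix

noncomputable section

def Amat : Matrix (Fin 3) (Fin 3) ℂ := !![0, 1, 0; 1, 0, 0; 0, 0, 0]

def Bmat (a : ℂ) : Matrix (Fin 3) (Fin 3) ℂ := !![0, a, 1; -a, 0, 0; 1 + a ^ 2, 0, 0]

/-- `G_a(x,ξ,η) = ξA + xηB`. -/
def Gmat (a : ℂ) (x ξ η : ℝ) : Matrix (Fin 3) (Fin 3) ℂ :=
  (ξ : ℂ) • Amat + ((x : ℂ) * (η : ℂ)) • Bmat a

lemma spec_iff (a : ℂ) (x ξ η : ℝ) (τ : ℂ) :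
    τ ∈ spectrum ℂ (Gmat a x ξ η) ↔
      τ * (τ ^ 2 - ((ξ : ℂ) ^ 2 + (x : ℂ) ^ 2 * (η : ℂ) ^ 2)) = 0 := by
  rw [spectrum.mem_iff, Matrix.isUnit_iff_isUnit_det, isUnit_iff_ne_zero, not_not]
  have : ((algebraMap ℂ (Matrix (Fin 3) (Fin 3) ℂ)) τ - Gmat a x ξ η).det
      = τ * (τ ^ 2 - ((ξ : ℂ) ^ 2 + (x : ℂ) ^ 2 * (η : ℂ) ^ 2)) := by
    rw [Algebra.algebraMap_eq_smul_one, Matrix.one_fin_three]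
    simp [Gmat, Amat, Bmat, Matrix.det_fin_three, Matrix.smul_apply]
    ring
  rw [this]

theorem stmt_13 (a : ℂ) (x ξ η : ℝ) :
    (∀ τ : ℂ, τ ∈ spectrum ℂ (Gmat a x ξ η) ↔
      τ = 0 ∨ τ = (Real.sqrt (ξ ^ 2 + x ^ 2 * η ^ 2) : ℂ)
        ∨ τ = -(Real.sqrt (ξ ^ 2 + x ^ 2 * η ^ 2) : ℂ)) ∧
    ∀ τ ∈ spectrum ℂ (Gmat a x ξ η), τ.im = 0 := by
  set r : ℝ := Real.sqrt (ξ ^ 2 + x ^ 2 * η ^ 2) with hr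
  have hs : (0:ℝ) ≤ ξ ^ 2 + x ^ 2 * η ^ 2 := by positivity
  have hr2 : ((r : ℂ)) ^ 2 = (ξ : ℂ) ^ 2 + (x : ℂ) ^ 2 * (η : ℂ) ^ 2 := by
    have : r ^ 2 = ξ ^ 2 + x ^ 2 * η ^ 2 := Real.sq_sqrt hs
    exact_mod_cast congrArg Complex.ofReal this
  have key : ∀ τ : ℂ, τ ∈ spectrum ℂ (Gmat a x ξ η) ↔
      τ = 0 ∨ τ = (r : ℂ) ∨ τ = -(r : ℂ) := by
    intro τ
    rw [spec_iff, ← hr2]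
    have : τ ^ 2 - (r : ℂ) ^ 2 = (τ - r) * (τ + r) := by ring
    rw [this, mul_eq_zero, mul_eq_zero, sub_eq_zero, add_eq_zero_iff_eq_neg]
  refine ⟨key, fun τ hτ => ?_⟩
  rcases (key τ).mp hτ with h | h | h <;> simp [h]

end
end
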